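/- Let p be an odd prime, and let a, b ∈ Z/p with a ≠ b. For the 1×1 Goeritz matrix G = (-p) of the (p,2)-torus knot with coloring vector v having v ≡ b - a (mod p) lifted to an integer, the colored untying invariant cu = (v^T G v)/p mod p equals -(b-a)² mod p. Consequently, as a and b range over Z/p with a ≠ b, cu takes exactly (p-1)/2 distinct nonzero values, one for each nonzero square times -1 in Z/p. -/

import Mathlib

/-!
The Goeritz form is `v * (-p) * v = p * (-v²)`, so dividing by `p` is exact and leaves
`-v² ≡ -(b - a)²`. The values `-x²` for units `x` are the negatives of the image of squaring on
the cyclic group `(ZMod p)ˣ` of even order `p - 1`, which has index `2`.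
-/

open Finset

theorem Int.mul_neg_mul_self_ediv {n : ℤ} (hn : n ≠ 0) (v : ℤ) : v * -n * v / n = -v ^ 2 := by
  rw [show v * -n * v = n * -v ^ 2 by ring, Int.mul_ediv_cancel_left _ hn]

theorem IsCyclic.card_powMonoidHom_two_range {G : Type*} [CommGroup G] [IsCyclic G] [Finite G]
    (h : Even (Nat.card G)) : Nat.card (powMonoidHom 2 : G →* G).range = Nat.card G / 2 := by
  rw [IsCyclic.card_powMonoidHom_range, Nat.gcd_eq_right (even_iff_two_dvd.mp h)]

theorem FiniteField.card_image_neg_sq_units {F : Type*} [Field F] [Fintype F] [DecidableEq F]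
    (hF : ringChar F ≠ 2) :
    #(univ.image fun x : Fˣ => -(x : F) ^ 2) = (Fintype.card F - 1) / 2 := by
  have hneg : Function.Injective fun u : Fˣ => -(u : F) :=
    fun u w h => Units.ext (neg_injective h)
  have hsquares : (univ.image fun x : Fˣ => -(x : F) ^ 2)
      = (univ.image (powMonoidHom 2 : Fˣ →* Fˣ)).image fun u : Fˣ => -(u : F) := by
    rw [image_image]; rfl
  have heven : Even (Nat.card Fˣ) := by
    rw [Nat.card_eq_fintype_card, Fintype.card_units]
    exact Nat.Odd.sub_odd (Nat.odd_iff.mpr (odd_card_of_char_ne_two hF)) odd_one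
  rw [hsquares, card_image_of_injective _ hneg, ← Set.toFinset_range, Set.toFinset_card,
    ← Nat.card_eq_fintype_card, ← MonoidHom.coe_range, SetLike.coe_sort_coe,
    IsCyclic.card_powMonoidHom_two_range heven, Nat.card_eq_fintype_card, Fintype.card_units]

theorem cu_torus_knot_general
    (p : ℕ) (hp : p.Prime) [NeZero p] (hodd : Odd p)
    (a b : ZMod p)
    (v : ℤ) (hv : (v : ZMod p) = b - a) :
    (((v * (-(p : ℤ)) * v) / (p : ℤ) : ℤ) : ZMod p) = -(b - a)^2 ∧
    (Finset.image (fun x : (ZMod p)ˣ => -((x : ZMod p))^2) Finset.univ).card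
      = (p - 1) / 2 := by
  have : Fact p.Prime := ⟨hp⟩
  constructor
  · rw [Int.mul_neg_mul_self_ediv (by exact_mod_cast hp.ne_zero)]
    push_cast [hv]
    rfl
  · have hchar : ringChar (ZMod p) ≠ 2 := by
      rw [ZMod.ringChar_zmod_n]
      rintro rfl
      exact Nat.not_odd_iff_even.mpr even_two hodd
    rw [FiniteField.card_image_neg_sq_units hchar, ZMod.card]

theorem cu_torus_knot
    (p : ℕ) (hp : p.Prime) [NeZero p] (hodd : Odd p)
    (a b : ZMod p) (hab : a ≠ b)
    (v : ℤ) (hv : (v : ZMod p) = b - a) :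
    (((v * (-(p : ℤ)) * v) / (p : ℤ) : ℤ) : ZMod p) = -(b - a)^2 ∧
    (Finset.image (fun x : (ZMod p)ˣ => -((x : ZMod p))^2) Finset.univ).card
      = (p - 1) / 2 :=
  cu_torus_knot_general p hp hodd a b v hv
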